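/- Let 0 < p ≤ 2, let f ∈ H^p(δ²) have atomic decomposition (f_n, R_n)_{n∈ℤ}, and let n ∈ ℤ. Then ∫_{[0,1]²} S(f_n)² dm ≤ 2 · ∫_{[0,1]² ∖ F_{n+1}} S(f_n)² dm. -/

import Mathlib

open MeasureTheory Set
open scoped ENNReal

/-- A dyadic interval `[k/2^n, (k+1)/2^n) ⊆ [0,1)`. -/
structure DyadicInterval where
  n : ℕ
  k : ℕ
  hk : k < 2 ^ n

namespace DyadicInterval

/-- Left endpoint. -/
noncomputable def left (I : DyadicInterval) : ℝ := I.k / 2 ^ I.n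

/-- Right endpoint. -/
noncomputable def right (I : DyadicInterval) : ℝ := (I.k + 1) / 2 ^ I.n

/-- Midpoint. -/
noncomputable def mid (I : DyadicInterval) : ℝ := (I.k + 1 / 2) / 2 ^ I.n

/-- The underlying point set of the dyadic interval. -/
noncomputable def set (I : DyadicInterval) : Set ℝ := Set.Ico I.left I.right

/-- The length `|I| = 2^{-n}`. -/
noncomputable def len (I : DyadicInterval) : ℝ := 1 / 2 ^ I.n

/-- The `L^∞`-normalised Haar function `h_I`: `+1` on the left half of `I`,
`-1` on the right half of `I`, `0` elsewhere. -/
noncomputable def haar (I : DyadicInterval) (s : ℝ) : ℝ :=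
  if s ∈ Set.Ico I.left I.mid then 1
  else if s ∈ Set.Ico I.mid I.right then -1
  else 0

end DyadicInterval

/-- A dyadic rectangle `I × J`. -/
abbrev DyadicRect := DyadicInterval × DyadicInterval

namespace DyadicRect

/-- The underlying point set of the dyadic rectangle. -/
noncomputable def set (R : DyadicRect) : Set (ℝ × ℝ) := R.1.set ×ˢ R.2.set

/-- The area `|I||J|`. -/
noncomputable def area (R : DyadicRect) : ℝ := R.1.len * R.2.len

/-- The 2D Haar function `h_{I×J}(s,t) = h_I(s) h_J(t)`. -/
noncomputable def haar (R : DyadicRect) (x : ℝ × ℝ) : ℝ := R.1.haar x.1 * R.2.haar x.2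

end DyadicRect

/-- The unit square `[0,1]²`. -/
noncomputable def unitSq : Set (ℝ × ℝ) := Set.Icc (0:ℝ) 1 ×ˢ Set.Icc (0:ℝ) 1

/-- The square function `S(f)(s,t) = (∑_{I×J} f_{I×J}² 1_{I×J}(s,t))^{1/2}`,
valued in `ℝ≥0∞`. -/
noncomputable def sqS (f : DyadicRect → ℝ) (x : ℝ × ℝ) : ℝ≥0∞ :=
  (∑' R : DyadicRect, Set.indicator R.set (fun _ => ENNReal.ofReal (f R ^ 2)) x) ^ (1/2 : ℝ)

/-- The `H^p(δ²)` quasi-norm `‖f‖_{H^p} = (∫_{[0,1]²} S(f)^p dm)^{1/p}`, valued in `ℝ≥0∞`.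
Membership `f ∈ H^p(δ²)` is expressed as `Hnorm p f ≠ ∞`. -/
noncomputable def Hnorm (p : ℝ) (f : DyadicRect → ℝ) : ℝ≥0∞ :=
  (∫⁻ x in unitSq, sqS f x ^ p) ^ (1/p)

/-- `‖f‖₂ = ‖f‖_{H²(δ²)} = (∑_{I×J} f_{I×J}² |I||J|)^{1/2}`. -/
noncomputable def l2norm (f : DyadicRect → ℝ) : ℝ≥0∞ :=
  (∑' R : DyadicRect, ENNReal.ofReal (f R ^ 2) * ENNReal.ofReal R.area) ^ (1/2 : ℝ)

/-- The level set `F_n = {(s,t) ∈ [0,1]² : S(f)(s,t) > 2^n}`. -/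
noncomputable def Fset (f : DyadicRect → ℝ) (n : ℤ) : Set (ℝ × ℝ) :=
  {x ∈ unitSq | (2 : ℝ≥0∞) ^ (n : ℝ) < sqS f x}

/-- The collection `R_n` of dyadic rectangles `I×J` with
`|(I×J) ∩ F_n| > |I×J|/2` and `|(I×J) ∩ F_{n+1}| ≤ |I×J|/2`. -/
noncomputable def Rcoll (f : DyadicRect → ℝ) (n : ℤ) : Set DyadicRect :=
  {R | ENNReal.ofReal R.area / 2 < volume (R.set ∩ Fset f n) ∧
       volume (R.set ∩ Fset f (n + 1)) ≤ ENNReal.ofReal R.area / 2}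

/-- The atom `f_n = ∑_{I×J ∈ R_n} f_{I×J} h_{I×J}`, i.e. the coefficient
sequence of `f` restricted to `R_n`. -/
noncomputable def fAtom (f : DyadicRect → ℝ) (n : ℤ) : DyadicRect → ℝ :=
  (Rcoll f n).indicator f

/-- The point set `R_n* = ⋃_{I×J ∈ R_n} I×J`. -/
noncomputable def RcollStar (f : DyadicRect → ℝ) (n : ℤ) : Set (ℝ × ℝ) :=
  ⋃ R ∈ Rcoll f n, R.set

/-!
Both sides are weighted sums over rectangles: `∫_A S(g)² = ∑_R g_R² |R ∩ A|`. A rectangle of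
`R_n` meets `F_{n+1}` in at most half its area, so `|R| ≤ 2 |R ∖ F_{n+1}|`, and off `R_n` the
coefficients of `f_n` vanish.
-/

theorem measure_le_two_mul_measure_diff_of_measure_inter_le_half {α F : Type*}
    [FunLike F (Set α) ℝ≥0∞] [OuterMeasureClass F α] (μ : F) {s t : Set α} (hs : μ s ≠ ∞)
    (h : μ (s ∩ t) ≤ μ s / 2) : μ s ≤ 2 * μ (s \ t) := by
  have half_le : μ s / 2 ≤ μ (s \ t) := by
    rw [← ENNReal.sub_half hs, tsub_le_iff_left]
    exact (measure_le_inter_add_sdiff μ s t).trans (add_le_add_left h _)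
  calc μ s = 2 * (μ s / 2) := (ENNReal.mul_div_cancel two_ne_zero ENNReal.ofNat_ne_top).symm
    _ ≤ 2 * μ (s \ t) := mul_le_mul_right half_le 2

instance : Countable DyadicInterval :=
  Function.Injective.countable (f := fun I : DyadicInterval => (I.n, I.k))
    fun ⟨_, _, _⟩ ⟨_, _, _⟩ h => by cases h; rfl

namespace DyadicInterval

theorem volume_set (I : DyadicInterval) : volume I.set = ENNReal.ofReal I.len := by
  rw [set, Real.volume_Ico, left, right, len, add_div, add_sub_cancel_left]

theorem set_subset_Icc (I : DyadicInterval) : I.set ⊆ Icc 0 1 := by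
  have left_nonneg : 0 ≤ I.left := by unfold left; positivity
  have right_le_one : I.right ≤ 1 := by
    rw [right, div_le_one (by positivity)]
    exact_mod_cast I.hk
  exact fun x ⟨hl, hr⟩ => ⟨left_nonneg.trans hl, hr.le.trans right_le_one⟩

end DyadicInterval

namespace DyadicRect

theorem measurableSet_set (R : DyadicRect) : MeasurableSet R.set :=
  measurableSet_Ico.prod measurableSet_Ico

theorem volume_set (R : DyadicRect) : volume R.set = ENNReal.ofReal R.area := by
  rw [set, Measure.volume_eq_prod, Measure.prod_prod, R.1.volume_set, R.2.volume_set, area,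
    ENNReal.ofReal_mul (by unfold DyadicInterval.len; positivity)]

theorem set_subset_unitSq (R : DyadicRect) : R.set ⊆ unitSq :=
  prod_mono R.1.set_subset_Icc R.2.set_subset_Icc

end DyadicRect

theorem setLIntegral_sqS_rpow_two (g : DyadicRect → ℝ) (A : Set (ℝ × ℝ)) :
    ∫⁻ x in A, sqS g x ^ (2 : ℝ) =
      ∑' R : DyadicRect, ENNReal.ofReal (g R ^ 2) * volume (R.set ∩ A) := by
  have sqS_rpow_two : ∀ x, sqS g x ^ (2 : ℝ) =
      ∑' R : DyadicRect, R.set.indicator (fun _ => ENNReal.ofReal (g R ^ 2)) x := by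
    intro x
    rw [sqS, ← ENNReal.rpow_mul]
    norm_num
  simp only [sqS_rpow_two]
  rw [lintegral_tsum fun R => (measurable_const.indicator R.measurableSet_set).aemeasurable]
  congr 1 with R
  rw [lintegral_indicator R.measurableSet_set, setLIntegral_const,
    Measure.restrict_apply R.measurableSet_set]

theorem volume_le_two_mul_volume_diff_Fset_of_mem_Rcoll {f : DyadicRect → ℝ} {n : ℤ}
    {R : DyadicRect} (hR : R ∈ Rcoll f n) :
    volume R.set ≤ 2 * volume (R.set \ Fset f (n + 1)) := by
  refine measure_le_two_mul_measure_diff_of_measure_inter_le_half volume ?_ ?_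
  · rw [R.volume_set]; exact ENNReal.ofReal_ne_top
  · rw [R.volume_set]; exact hR.2

theorem atom_square_integral_off_level_set_general
    (f : DyadicRect → ℝ) (n : ℤ) :
    (∫⁻ x in unitSq, sqS (fAtom f n) x ^ (2:ℝ)) ≤
      2 * ∫⁻ x in unitSq \ Fset f (n + 1), sqS (fAtom f n) x ^ (2:ℝ) := by
  rw [setLIntegral_sqS_rpow_two, setLIntegral_sqS_rpow_two, ← ENNReal.tsum_mul_left]
  refine ENNReal.tsum_le_tsum fun R => ?_
  by_cases hR : R ∈ Rcoll f n
  · rw [inter_eq_self_of_subset_left R.set_subset_unitSq, ← inter_sdiff_assoc,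
      inter_eq_self_of_subset_left R.set_subset_unitSq, mul_left_comm]
    exact mul_le_mul_right (volume_le_two_mul_volume_diff_Fset_of_mem_Rcoll hR) _
  · simp [fAtom, indicator_of_notMem hR]

/-- `∫ S(f_n)² dm ≤ 2 ∫_{[0,1]²∖F_{n+1}} S(f_n)² dm`. -/
theorem atom_square_integral_off_level_set (p : ℝ) (hp0 : 0 < p) (hp2 : p ≤ 2)
    (f : DyadicRect → ℝ) (hf : Hnorm p f ≠ ∞) (n : ℤ) :
    (∫⁻ x in unitSq, sqS (fAtom f n) x ^ (2:ℝ)) ≤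
      2 * ∫⁻ x in unitSq \ Fset f (n + 1), sqS (fAtom f n) x ^ (2:ℝ) :=
  atom_square_integral_off_level_set_general f n
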